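/- arXiv:1510.05207 — 3 statements merged into one kernel-verified Lean document; each statement's English description precedes it below -/
import Mathlib

section
/- Every eigenvalue λ of a complex tensor A of order m and dimension n lies in the Geršgorin-type set Γ(A) = ⋃_{i∈N} {z ∈ ℂ : |z - a_{i…i}| ≤ r_i(A)}, where r_i(A) = Σ_{(i₂,…,i_m): not all equal to i} |a_{i i₂ … i_m}|. -/
open Finset

/-- off-diagonal row sum r_i(A) for a complex tensor of order k+1, dimension n -/
noncomputable def rT {n k : ℕ} (A : (Fin (k+1) → Fin n) → ℂ) (i : Fin n) : ℝ :=
  ∑ α ∈ Finset.univ.filter (fun α : Fin k → Fin n => α ≠ fun _ => i),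
    ‖A (Fin.cons i α)‖

/-- r_i^j(A) = r_i(A) - |a_{ij...j}| -/
noncomputable def rTj {n k : ℕ} (A : (Fin (k+1) → Fin n) → ℂ) (i j : Fin n) : ℝ :=
  rT A i - ‖A (Fin.cons i fun _ => j)‖

/-- r_j^{Δ^S}(A): sum over index tuples all lying in S, excluding the diagonal tuple -/
noncomputable def rDelta {n k : ℕ} (A : (Fin (k+1) → Fin n) → ℂ) (S : Finset (Fin n))
    (j : Fin n) : ℝ :=
  ∑ α ∈ Finset.univ.filter (fun α : Fin k → Fin n => (∀ l, α l ∈ S) ∧ α ≠ fun _ => j),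
    ‖A (Fin.cons j α)‖

/-- r_j^{Δ^S-complement}(A): sum over index tuples not all lying in S -/
noncomputable def rDeltaC {n k : ℕ} (A : (Fin (k+1) → Fin n) → ℂ) (S : Finset (Fin n))
    (j : Fin n) : ℝ :=
  ∑ α ∈ Finset.univ.filter (fun α : Fin k → Fin n => ¬ (∀ l, α l ∈ S)),
    ‖A (Fin.cons j α)‖

/-- λ is an eigenvalue of the tensor A: A x^{m-1} = λ x^{[m-1]} for some nonzero x -/
def IsEig {n k : ℕ} (A : (Fin (k+1) → Fin n) → ℂ) (lam : ℂ) : Prop :=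
  ∃ x : Fin n → ℂ, x ≠ 0 ∧ ∀ i,
    (∑ α : Fin k → Fin n, A (Fin.cons i α) * ∏ l, x (α l)) = lam * (x i) ^ k

theorem stmt2 {n k : ℕ} (A : (Fin (k+1) → Fin n) → ℂ) (lam : ℂ)
    (h : IsEig A lam) :
    ∃ i : Fin n, ‖lam - A (fun _ => i)‖ ≤ rT A i := by

  obtain ⟨x, hx0, hx⟩ := h
  have hn : Nonempty (Fin n) := by
    by_contra h'
    exact hx0 (funext fun j => absurd ⟨j⟩ h')
  obtain ⟨i, -, hi⟩ := Finset.exists_max_image Finset.univ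
    (fun j => ‖x j‖) Finset.univ_nonempty
  have hxi : 0 < ‖x i‖ := by
    obtain ⟨j, hj⟩ := Function.ne_iff.mp hx0
    exact lt_of_lt_of_le (norm_pos_iff.mpr (by simpa using hj)) (hi j (Finset.mem_univ j))
  have hcons : Fin.cons i (fun _ => i) = fun _ : Fin (k+1) => i := by
    funext l
    cases l using Fin.cases <;> simp
  have hsplit : (∑ α : Fin k → Fin n, A (Fin.cons i α) * ∏ l, x (α l))
      = A (fun _ => i) * (x i)^k
        + ∑ α ∈ Finset.univ.filter (fun α : Fin k → Fin n => α ≠ fun _ => i),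
            A (Fin.cons i α) * ∏ l, x (α l) := by
    rw [← Finset.sum_filter_add_sum_filter_not Finset.univ
      (fun α : Fin k → Fin n => α = fun _ => i)]
    congr 1
    rw [Finset.filter_eq' Finset.univ (fun _ : Fin k => i)]
    simp [hcons]
  have key : (lam - A (fun _ => i)) * (x i)^k
      = ∑ α ∈ Finset.univ.filter (fun α : Fin k → Fin n => α ≠ fun _ => i),
            A (Fin.cons i α) * ∏ l, x (α l) := by
    have := hx i
    rw [hsplit] at this
    linear_combination -this
  have hb : ‖lam - A (fun _ => i)‖ * ‖x i‖ ^ k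
      ≤ rT A i * ‖x i‖ ^ k := by
    calc ‖lam - A (fun _ => i)‖ * ‖x i‖ ^ k
        = ‖(lam - A (fun _ => i)) * (x i)^k‖ := by
          rw [norm_mul, norm_pow]
      _ ≤ ∑ α ∈ Finset.univ.filter (fun α : Fin k → Fin n => α ≠ fun _ => i),
            ‖A (Fin.cons i α) * ∏ l, x (α l)‖ := by
          rw [key]; exact norm_sum_le _ _
      _ ≤ ∑ α ∈ Finset.univ.filter (fun α : Fin k → Fin n => α ≠ fun _ => i),
            ‖A (Fin.cons i α)‖ * ‖x i‖ ^ k := by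
          refine Finset.sum_le_sum fun α _ => ?_
          rw [norm_mul, norm_prod]
          refine mul_le_mul_of_nonneg_left ?_ (norm_nonneg _)
          calc (∏ l, ‖x (α l)‖)
              ≤ ∏ _l : Fin k, ‖x i‖ :=
                Finset.prod_le_prod (fun l _ => norm_nonneg _)
                  (fun l _ => hi (α l) (Finset.mem_univ _))
            _ = ‖x i‖ ^ k := by simp
      _ = rT A i * ‖x i‖ ^ k := by
          rw [rT, Finset.sum_mul]
  exact ⟨i, le_of_mul_le_mul_right hb (pow_pos hxi k)⟩
end

section
/- Let A ∈ C^{[m,n]} with n ≥ 2. Every eigenvalue λ of A lies in K(A) = ⋃_{i≠j} {z ∈ ℂ : (|z - a_{i…i}| - r_i^j(A)) |z - a_{j…j}| ≤ |a_{i j … j}| r_j(A)}, where r_i^j(A) = r_i(A) - |a_{i j … j}|. -/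
open Finset

/-! If `x` is an eigenvector and `t` is an index where `‖x t‖` is maximal, the `t`-th eigen-equation
with the term `a_{ts…s} x_s^k` kept apart gives
`(‖λ - a_{t…t}‖ - r_t^s) ‖x_t‖^k ≤ ‖a_{ts…s}‖ ‖x_s‖^k`, and the `s`-th one gives
`‖λ - a_{s…s}‖ ‖x_s‖^k ≤ r_s ‖x_t‖^k` for every `s ≠ t`. Multiplying the two inequalities and
cancelling `‖x_t‖^k ‖x_s‖^k` puts `λ` in the set for the pair `(t, s)`; the first inequality
guarantees `x_s ≠ 0` whenever its left side is positive. For order `m = 1` (`k = 0`) the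
eigen-equation reads `λ = a_i` for every `i`. -/

lemma rT_nonneg {n k : ℕ} (A : (Fin (k+1) → Fin n) → ℂ) (i : Fin n) : 0 ≤ rT A i :=
  sum_nonneg fun _ _ => norm_nonneg _

lemma rT_eq_sum_erase {n k : ℕ} (A : (Fin (k+1) → Fin n) → ℂ) (i : Fin n) :
    rT A i = ∑ α ∈ univ.erase (fun _ => i), ‖A (Fin.cons i α)‖ := by
  rw [rT, filter_ne']

lemma rTj_eq_sum_erase {n k : ℕ} (A : (Fin (k+1) → Fin n) → ℂ) {i j : Fin n}
    (hji : (fun _ => j : Fin k → Fin n) ≠ fun _ => i) :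
    rTj A i j = ∑ α ∈ (univ.erase fun _ => i).erase fun _ => j, ‖A (Fin.cons i α)‖ := by
  rw [rTj, rT_eq_sum_erase, ← add_sum_erase _ _ (mem_erase.mpr ⟨hji, mem_univ _⟩)]
  ring

lemma Fin.cons_const {α : Type*} {k : ℕ} (a : α) :
    (Fin.cons a (fun _ => a) : Fin (k+1) → α) = fun _ => a := by
  funext l; exact Fin.cases rfl (fun _ => rfl) l

lemma prod_norm_comp_le_pow {n k : ℕ} {x : Fin n → ℂ} {M : ℝ} (hM : ∀ l, ‖x l‖ ≤ M)
    (α : Fin k → Fin n) : ∏ l, ‖x (α l)‖ ≤ M ^ k := by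
  calc ∏ l, ‖x (α l)‖ ≤ ∏ _l : Fin k, M :=
        prod_le_prod (fun l _ => norm_nonneg (x (α l))) fun l _ => hM (α l)
    _ = M ^ k := by rw [prod_const, card_univ, Fintype.card_fin]

section EigenEquation

variable {n k : ℕ} {A : (Fin (k+1) → Fin n) → ℂ} {lam : ℂ} {x : Fin n → ℂ}

lemma sum_erase_eq_of_eigen (hx : ∀ i, ∑ α, A (Fin.cons i α) * ∏ l, x (α l) = lam * x i ^ k)
    (i : Fin n) :
    ∑ α ∈ univ.erase (fun _ => i), A (Fin.cons i α) * ∏ l, x (α l) =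
      (lam - A (fun _ => i)) * x i ^ k := by
  have h := hx i
  rw [← add_sum_erase _ _ (mem_univ (fun _ => i)), Fin.cons_const, prod_const, card_univ,
    Fintype.card_fin] at h
  linear_combination h

lemma norm_sub_diag_mul_le_of_eigen
    (hx : ∀ i, ∑ α, A (Fin.cons i α) * ∏ l, x (α l) = lam * x i ^ k) (i : Fin n) :
    ‖lam - A (fun _ => i)‖ * ‖x i‖ ^ k ≤
      ∑ α ∈ univ.erase (fun _ => i), ‖A (Fin.cons i α)‖ * ∏ l, ‖x (α l)‖ := by
  calc ‖lam - A (fun _ => i)‖ * ‖x i‖ ^ k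
      = ‖∑ α ∈ univ.erase (fun _ => i), A (Fin.cons i α) * ∏ l, x (α l)‖ := by
        rw [sum_erase_eq_of_eigen hx, norm_mul, norm_pow]
    _ ≤ ∑ α ∈ univ.erase (fun _ => i), ‖A (Fin.cons i α) * ∏ l, x (α l)‖ := norm_sum_le _ _
    _ = _ := by simp only [norm_mul, norm_prod]

lemma norm_sub_diag_mul_le_rT_of_eigen
    (hx : ∀ i, ∑ α, A (Fin.cons i α) * ∏ l, x (α l) = lam * x i ^ k) {M : ℝ}
    (hM : ∀ l, ‖x l‖ ≤ M) (i : Fin n) :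
    ‖lam - A (fun _ => i)‖ * ‖x i‖ ^ k ≤ rT A i * M ^ k := by
  calc ‖lam - A (fun _ => i)‖ * ‖x i‖ ^ k
      ≤ ∑ α ∈ univ.erase (fun _ => i), ‖A (Fin.cons i α)‖ * ∏ l, ‖x (α l)‖ :=
        norm_sub_diag_mul_le_of_eigen hx i
    _ ≤ ∑ α ∈ univ.erase (fun _ => i), ‖A (Fin.cons i α)‖ * M ^ k :=
        sum_le_sum fun α _ =>
          mul_le_mul_of_nonneg_left (prod_norm_comp_le_pow hM α) (norm_nonneg _)
    _ = rT A i * M ^ k := by rw [rT_eq_sum_erase, sum_mul]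

lemma norm_sub_diag_mul_le_rTj_of_eigen
    (hx : ∀ i, ∑ α, A (Fin.cons i α) * ∏ l, x (α l) = lam * x i ^ k) {M : ℝ}
    (hM : ∀ l, ‖x l‖ ≤ M) (hk : 0 < k) {i j : Fin n} (hij : i ≠ j) :
    ‖lam - A (fun _ => i)‖ * ‖x i‖ ^ k ≤
      rTj A i j * M ^ k + ‖A (Fin.cons i fun _ => j)‖ * ‖x j‖ ^ k := by
  have hji : (fun _ => j : Fin k → Fin n) ≠ fun _ => i := fun h => hij (congrFun h ⟨0, hk⟩).symm
  have hrest : ∑ α ∈ (univ.erase fun _ => i).erase fun _ => j,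
      ‖A (Fin.cons i α)‖ * ∏ l, ‖x (α l)‖ ≤ rTj A i j * M ^ k := by
    rw [rTj_eq_sum_erase A hji, sum_mul]
    exact sum_le_sum fun α _ =>
      mul_le_mul_of_nonneg_left (prod_norm_comp_le_pow hM α) (norm_nonneg _)
  have h := norm_sub_diag_mul_le_of_eigen hx i
  rw [← add_sum_erase _ _ (mem_erase.mpr ⟨hji, mem_univ _⟩), prod_const, card_univ,
    Fintype.card_fin] at h
  linarith

end EigenEquation

lemma IsEig.eq_diag_of_order_one {n : ℕ} {A : (Fin (0+1) → Fin n) → ℂ} {lam : ℂ}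
    (h : IsEig A lam) (i : Fin n) : lam = A (fun _ => i) := by
  obtain ⟨x, -, hx⟩ := h
  have hempty : univ.erase (fun _ => i : Fin 0 → Fin n) = ∅ := by
    ext α; simp [Subsingleton.elim α (fun _ => i)]
  have := sum_erase_eq_of_eigen hx i
  rw [hempty, sum_empty, pow_zero, mul_one] at this
  exact sub_eq_zero.mp this.symm

lemma exists_norm_le_norm_of_ne_zero {n : ℕ} {x : Fin n → ℂ} (hx : x ≠ 0) :
    ∃ t, 0 < ‖x t‖ ∧ ∀ l, ‖x l‖ ≤ ‖x t‖ := by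
  obtain ⟨l, hl⟩ := Function.ne_iff.mp hx
  have : Nonempty (Fin n) := ⟨l⟩
  obtain ⟨t, ht⟩ := Finite.exists_max fun l => ‖x l‖
  exact ⟨t, (norm_pos_iff.mpr hl).trans_le (ht l), ht⟩

lemma mul_le_mul_of_cross_le {a c L r S X : ℝ} (ha : 0 ≤ a) (hr : 0 ≤ r) (hL : 0 ≤ L)
    (hS : 0 ≤ S) (hX : 0 < X) (hc : c * X ≤ a * S) (hL' : L * S ≤ r * X) : c * L ≤ a * r := by
  rcases le_or_gt c 0 with hc0 | hc0
  · nlinarith [mul_nonneg ha hr]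
  have hSpos : 0 < S := by
    rcases hS.lt_or_eq with hS | rfl
    · exact hS
    · nlinarith [mul_pos hc0 hX]
  have key : (c * X) * (L * S) ≤ (a * S) * (r * X) :=
    mul_le_mul hc hL' (mul_nonneg hL hS) (mul_nonneg ha hS)
  refine le_of_mul_le_mul_right ?_ (mul_pos hX hSpos)
  linarith

theorem stmt3 {n k : ℕ} (hn : 2 ≤ n) (A : (Fin (k+1) → Fin n) → ℂ) (lam : ℂ)
    (h : IsEig A lam) :
    ∃ i j : Fin n, i ≠ j ∧
      (‖lam - A (fun _ => i)‖ - rTj A i j) * ‖lam - A (fun _ => j)‖ ≤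
        ‖A (Fin.cons i fun _ => j)‖ * rT A j := by
  rcases Nat.eq_zero_or_pos k with rfl | hk
  · refine ⟨⟨0, by omega⟩, ⟨1, by omega⟩, by simp [Fin.ext_iff], ?_⟩
    rw [← h.eq_diag_of_order_one ⟨1, by omega⟩, sub_self, norm_zero, mul_zero]
    exact mul_nonneg (norm_nonneg _) (rT_nonneg A _)
  obtain ⟨x, hx0, hx⟩ := h
  obtain ⟨t, ht, hmax⟩ := exists_norm_le_norm_of_ne_zero hx0
  obtain ⟨s, hst⟩ := Fintype.exists_ne_of_one_lt_card (by simp; omega) t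
  refine ⟨t, s, hst.symm, mul_le_mul_of_cross_le (norm_nonneg _) (rT_nonneg A s) (norm_nonneg _)
    (by positivity) (pow_pos ht k) ?_ (norm_sub_diag_mul_le_rT_of_eigen hx hmax s)⟩
  have := norm_sub_diag_mul_le_rTj_of_eigen hx hmax hk hst.symm
  linarith
end

section
/- If A ∈ C^{[m,n]} is an S-QDSDD tensor for some nonempty proper subset S of N, then either |a_{i…i}| > r_i(A) for all i ∈ S, or |a_{j…j}| > r_j(A) for all j ∈ S̄. -/
open Finset

theorem rT_lt_or_rT_lt_of_mul_lt {n k : ℕ} (A : (Fin (k+1) → Fin n) → ℂ) (i j : Fin n)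
    (h : rT A j * ‖A (Fin.cons i fun _ => j)‖ <
      (‖A (fun _ => i)‖ - rTj A i j) * ‖A (fun _ => j)‖) :
    rT A i < ‖A (fun _ => i)‖ ∨ rT A j < ‖A (fun _ => j)‖ := by
  by_contra! hc
  obtain ⟨hri, hrj⟩ := hc
  have hgap : ‖A (fun _ => i)‖ - rTj A i j ≤ ‖A (Fin.cons i fun _ => j)‖ := by
    unfold rTj; linarith
  have hbound := calc
    (‖A (fun _ => i)‖ - rTj A i j) * ‖A (fun _ => j)‖
        ≤ ‖A (Fin.cons i fun _ => j)‖ * ‖A (fun _ => j)‖ :=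
      mul_le_mul_of_nonneg_right hgap (norm_nonneg _)
    _ ≤ ‖A (Fin.cons i fun _ => j)‖ * rT A j :=
      mul_le_mul_of_nonneg_left hrj (norm_nonneg _)
  linarith

theorem stmt18_general {n k : ℕ} (A : (Fin (k+1) → Fin n) → ℂ)
    (S : Finset (Fin n))
    (h : ∀ i ∈ S, ∀ j ∈ Sᶜ,
      rT A j * ‖A (Fin.cons i fun _ => j)‖ <
        (‖A (fun _ => i)‖ - rTj A i j) * ‖A (fun _ => j)‖ ∧
      rT A i * ‖A (Fin.cons j fun _ => i)‖ <
        (‖A (fun _ => j)‖ - rTj A j i) * ‖A (fun _ => i)‖) :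
    (∀ i ∈ S, rT A i < ‖A (fun _ => i)‖) ∨
    (∀ j ∈ Sᶜ, rT A j < ‖A (fun _ => j)‖) := by
  by_contra! hc
  obtain ⟨⟨i, hi, hri⟩, ⟨j, hj, hrj⟩⟩ := hc
  rcases rT_lt_or_rT_lt_of_mul_lt A i j (h i hi j hj).1 with hlt | hlt
  · exact hri.not_gt hlt
  · exact hrj.not_gt hlt

theorem stmt18 {n k : ℕ} (hn : 2 ≤ n) (A : (Fin (k+1) → Fin n) → ℂ)
    (S : Finset (Fin n)) (hS : S.Nonempty) (hS' : S ≠ Finset.univ)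
    (h : ∀ i ∈ S, ∀ j ∈ Sᶜ,
      rT A j * ‖A (Fin.cons i fun _ => j)‖ <
        (‖A (fun _ => i)‖ - rTj A i j) * ‖A (fun _ => j)‖ ∧
      rT A i * ‖A (Fin.cons j fun _ => i)‖ <
        (‖A (fun _ => j)‖ - rTj A j i) * ‖A (fun _ => i)‖) :
    (∀ i ∈ S, rT A i < ‖A (fun _ => i)‖) ∨
    (∀ j ∈ Sᶜ, rT A j < ‖A (fun _ => j)‖) :=
  stmt18_general A S h
end
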